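/- For every n ≥ 1 and every nonempty subset ℰ ⊆ {E, F} of enzymes, the semi-open network 𝒫ⁿ_{ℰ⇌0} has absolute concentration robustness in every species of ℰ: for every choice of reaction rates κ, every positive steady state x of (𝒫ⁿ_{ℰ⇌0}, κ) satisfies x_E = κ_{0→E}/κ_{E→0} for each E ∈ ℰ. -/
import Mathlib


/-- A reaction `y → y'` is a pair of complexes, each a vector of
nonnegative integer coefficients indexed by the species: the source and the target. -/
abbrev Reaction (S : Type) : Type := (S → ℕ) × (S → ℕ)

section General

variable {S : Type} [Fintype S] [DecidableEq S]

/-- The complex consisting of a single copy of species `s`. -/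
def unitC (s : S) : S → ℕ := fun t => if t = s then 1 else 0

/-- The complex `a + b`. -/
def pairC (a b : S) : S → ℕ := fun t => (if t = a then 1 else 0) + (if t = b then 1 else 0)

/-- The mass action right-hand side `f_κ` of a network `R` with rates `κ`. -/
def massAction (R : Finset (Reaction S)) (κ : Reaction S → ℝ) (x : S → ℝ) : S → ℝ :=
  fun s => ∑ r ∈ R, κ r * (∏ t, x t ^ r.1 t) * ((r.2 s : ℝ) - (r.1 s : ℝ))

/-- The stoichiometric subspace of a network: the span of its reaction vectors. -/
def stoichSubspace (R : Finset (Reaction S)) : Submodule ℝ (S → ℝ) :=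
  Submodule.span ℝ ((fun r : Reaction S => fun s => ((r.2 s : ℝ) - (r.1 s : ℝ))) '' ↑R)

/-- A positive steady state of the mass action system `(R, κ)`. -/
def isPosSteadyState (R : Finset (Reaction S)) (κ : Reaction S → ℝ) (x : S → ℝ) : Prop :=
  (∀ s, 0 < x s) ∧ massAction R κ x = 0

/-- A steady state is nondegenerate if the kernel of the Jacobian of the mass action
right-hand side intersects the stoichiometric subspace trivially. -/
def nondegenerate (R : Finset (Reaction S)) (κ : Reaction S → ℝ) (x : S → ℝ) : Prop :=
  ∀ v ∈ stoichSubspace R, fderiv ℝ (massAction R κ) x v = 0 → v = 0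

/-- A network admits nondegenerate multistationarity if for some positive rates there are
two distinct nondegenerate positive steady states in the same stoichiometric
compatibility class. -/
def admitsNondegMultistationarity (R : Finset (Reaction S)) : Prop :=
  ∃ κ : Reaction S → ℝ, (∀ r ∈ R, 0 < κ r) ∧
    ∃ x y : S → ℝ, x ≠ y ∧
      isPosSteadyState R κ x ∧ isPosSteadyState R κ y ∧
      nondegenerate R κ x ∧ nondegenerate R κ y ∧
      y - x ∈ stoichSubspace R

/-- The inflow reaction `0 → s`. -/
def inflow (s : S) : Reaction S := (fun _ => 0, unitC s)

/-- The outflow reaction `s → 0`. -/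
def outflow (s : S) : Reaction S := (unitC s, fun _ => 0)

/-- The open network on `E`: add inflow and outflow reactions for every species of `E`. -/
def openOn (R : Finset (Reaction S)) (E : Finset S) : Finset (Reaction S) :=
  R ∪ E.image inflow ∪ E.image outflow

/-- A conservation law: a vector orthogonal to the stoichiometric subspace. -/
def conservationLaw (R : Finset (Reaction S)) (w : S → ℝ) : Prop :=
  ∀ v ∈ stoichSubspace R, ∑ s, w s * v s = 0

/-- A set `E` of species is independently conserved in `R` if there are conservation laws
`L e` for `e ∈ E` such that `L e` has a nonzero coordinate at `e` and zero coordinate at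
`e` for every other `L e'`, `e' ∈ E`. -/
def IndepConserved (R : Finset (Reaction S)) (E : Finset S) : Prop :=
  ∃ L : S → (S → ℝ), ∀ e ∈ E,
    conservationLaw R (L e) ∧ L e e ≠ 0 ∧ ∀ e' ∈ E, e' ≠ e → L e' e = 0

/-- A species is closed in `R` if neither its inflow nor its outflow is a reaction of `R`. -/
def ClosedIn (R : Finset (Reaction S)) (s : S) : Prop :=
  inflow s ∉ R ∧ outflow s ∉ R

/-- Projection of a complex onto the coordinates outside `E`. -/
def projC (E : Finset S) (y : S → ℕ) : {s : S // s ∉ E} → ℕ := fun s => y s.val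

/-- Projection of a reaction onto the coordinates outside `E`. -/
def projR (E : Finset S) (r : Reaction S) : Reaction {s : S // s ∉ E} :=
  (projC E r.1, projC E r.2)

/-- The projected network `G₋E` on the species outside `E`: project all reactions and
remove self-loops. -/
def projNet (R : Finset (Reaction S)) (E : Finset S) : Finset (Reaction {s : S // s ∉ E}) :=
  (R.image (projR E)).filter fun r => r.1 ≠ r.2

/-- Inclusion of a reaction on the species of `E` into a reaction on all of `S`. -/
def inclR (E : Finset S) (r : Reaction {s : S // s ∈ E}) : Reaction S :=
  (fun s => if h : s ∈ E then r.1 ⟨s, h⟩ else 0,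
   fun s => if h : s ∈ E then r.2 ⟨s, h⟩ else 0)

/-- `R` has at most `l` positive steady states in each stoichiometric compatibility class,
for every choice of positive reaction rates: there is no injective family of `l + 1`
positive steady states lying pairwise in the same compatibility class. -/
def atMostPosSS (R : Finset (Reaction S)) (l : ℕ) : Prop :=
  ∀ κ : Reaction S → ℝ, (∀ r ∈ R, 0 < κ r) →
    ∀ f : Fin (l + 1) → (S → ℝ),
      (∀ j, isPosSteadyState R κ (f j)) →
      (∀ j k, f k - f j ∈ stoichSubspace R) →
      ¬ Function.Injective f

/-- Monostationarity: at most one positive steady state in each stoichiometric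
compatibility class, for every choice of positive rates. -/
def monostationary (R : Finset (Reaction S)) : Prop :=
  atMostPosSS R 1

end General

/-- Species of the sequential `n`-site phosphorylation–dephosphorylation cycle:
the enzymes `E`, `F`, the substrates `S i` for `i = 0, …, n`, and the intermediates
`ES i` for `i = 0, …, n-1` and `FS i` (denoting `FS_{i+1}`) for `i = 0, …, n-1`. -/
inductive PS (n : ℕ) : Type
  | E : PS n
  | F : PS n
  | S : Fin (n + 1) → PS n
  | ES : Fin n → PS n
  | FS : Fin n → PS n
deriving DecidableEq, Fintype

/-- The sequential `n`-site phosphorylation–dephosphorylation cycle `𝒫ⁿ`, with the `6n`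
reactions `S_i + E ⇌ ES_i`, `ES_i → S_{i+1} + E` for `i = 0, …, n-1` and
`S_i + F ⇌ FS_i`, `FS_i → S_{i-1} + F` for `i = 1, …, n`. -/
def Pcycle (n : ℕ) : Finset (Reaction (PS n)) :=
  (Finset.univ.image fun i : Fin n => (pairC (PS.S i.castSucc) PS.E, unitC (PS.ES i))) ∪
  (Finset.univ.image fun i : Fin n => (unitC (PS.ES i), pairC (PS.S i.castSucc) PS.E)) ∪
  (Finset.univ.image fun i : Fin n => (unitC (PS.ES i), pairC (PS.S i.succ) PS.E)) ∪
  (Finset.univ.image fun i : Fin n => (pairC (PS.S i.succ) PS.F, unitC (PS.FS i))) ∪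
  (Finset.univ.image fun i : Fin n => (unitC (PS.FS i), pairC (PS.S i.succ) PS.F)) ∪
  (Finset.univ.image fun i : Fin n => (unitC (PS.FS i), pairC (PS.S i.castSucc) PS.F))

section ACRAux

variable {S : Type} [Fintype S] [DecidableEq S]

lemma wsum_unit (w : S → ℝ) (a : S) : ∑ s, w s * ((unitC a s : ℕ) : ℝ) = w a := by
  simp [unitC, mul_ite, Finset.sum_ite_eq']

lemma wsum_pair (w : S → ℝ) (a b : S) :
    ∑ s, w s * ((pairC a b s : ℕ) : ℝ) = w a + w b := by
  simp [pairC, mul_add, Finset.sum_add_distrib, mul_ite, Finset.sum_ite_eq']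

lemma wsum_up (w : S → ℝ) (a b c : S) :
    ∑ s, w s * ((unitC c s : ℝ) - (pairC a b s : ℝ)) = w c - (w a + w b) := by
  simp only [mul_sub, Finset.sum_sub_distrib, wsum_unit, wsum_pair]

lemma wsum_pu (w : S → ℝ) (a b c : S) :
    ∑ s, w s * ((pairC a b s : ℝ) - (unitC c s : ℝ)) = (w a + w b) - w c := by
  simp only [mul_sub, Finset.sum_sub_distrib, wsum_unit, wsum_pair]

lemma acr_key (R : Finset (Reaction S)) (κ : Reaction S → ℝ) (x : S → ℝ)
    (hx : isPosSteadyState R κ x) (w : S → ℝ) (e : S)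
    (hin : inflow e ∈ R) (hout : outflow e ∈ R)
    (hκout : κ (outflow e) ≠ 0) (hwe : w e = 1)
    (hzero : ∀ r ∈ R, r ≠ inflow e → r ≠ outflow e →
      ∑ s, w s * ((r.2 s : ℝ) - (r.1 s : ℝ)) = 0) :
    x e = κ (inflow e) / κ (outflow e) := by
  have hne : inflow e ≠ outflow e := by
    intro h
    have := congrArg (fun r : Reaction S => r.1 e) h
    simp [inflow, outflow, unitC] at this
  have h0 : ∑ r ∈ R, κ r * (∏ t, x t ^ r.1 t) *
      (∑ s, w s * ((r.2 s : ℝ) - (r.1 s : ℝ))) = 0 := by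
    have h1 : ∑ s, w s * massAction R κ x s = 0 := by simp [hx.2]
    rw [← h1]
    simp only [massAction, Finset.mul_sum]
    rw [Finset.sum_comm]
    exact Finset.sum_congr rfl fun s _ =>
      Finset.sum_congr rfl fun r _ => by ring
  have hsub : ({inflow e, outflow e} : Finset (Reaction S)) ⊆ R := by
    intro r hr
    simp only [Finset.mem_insert, Finset.mem_singleton] at hr
    rcases hr with rfl | rfl <;> assumption
  have h2 : ∑ r ∈ ({inflow e, outflow e} : Finset (Reaction S)),
      κ r * (∏ t, x t ^ r.1 t) * (∑ s, w s * ((r.2 s : ℝ) - (r.1 s : ℝ))) = 0 := by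
    rw [Finset.sum_subset hsub]
    · exact h0
    · intro r hr hnr
      simp only [Finset.mem_insert, Finset.mem_singleton, not_or] at hnr
      rw [hzero r hr hnr.1 hnr.2, mul_zero]
  rw [Finset.sum_pair hne] at h2
  have hprod_in : (∏ t, x t ^ (inflow e).1 t) = 1 := by
    simp [inflow]
  have hprod_out : (∏ t, x t ^ (outflow e).1 t) = x e := by
    simp only [outflow, unitC]
    simp [pow_ite, Finset.prod_ite_eq']
  have hsum_in : ∑ s, w s * (((inflow e).2 s : ℝ) - ((inflow e).1 s : ℝ)) = 1 := by
    simp [inflow, unitC, mul_ite, Finset.sum_ite_eq', hwe]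
  have hsum_out : ∑ s, w s * (((outflow e).2 s : ℝ) - ((outflow e).1 s : ℝ)) = -1 := by
    simp [outflow, unitC, mul_ite, Finset.sum_ite_eq', hwe]
  rw [hprod_in, hprod_out, hsum_in, hsum_out] at h2
  field_simp
  nlinarith [h2]

end ACRAux

section ACRAux2

variable {S : Type} [Fintype S] [DecidableEq S]

lemma wsum_case1 (w : S → ℝ) (a b c : S) (h : w a + w b = w c) :
    ∑ s, w s * ((((pairC a b, unitC c) : Reaction S).2 s : ℝ)
      - (((pairC a b, unitC c) : Reaction S).1 s : ℝ)) = 0 := by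
  show ∑ s, w s * ((unitC c s : ℝ) - (pairC a b s : ℝ)) = 0
  rw [wsum_up, h, sub_self]

lemma wsum_case2 (w : S → ℝ) (a b c : S) (h : w a + w b = w c) :
    ∑ s, w s * ((((unitC c, pairC a b) : Reaction S).2 s : ℝ)
      - (((unitC c, pairC a b) : Reaction S).1 s : ℝ)) = 0 := by
  show ∑ s, w s * ((pairC a b s : ℝ) - (unitC c s : ℝ)) = 0
  rw [wsum_pu, h, sub_self]

end ACRAux2

def wE {n : ℕ} : PS n → ℝ
  | PS.E => 1
  | PS.ES _ => 1
  | _ => 0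

def wF {n : ℕ} : PS n → ℝ
  | PS.F => 1
  | PS.FS _ => 1
  | _ => 0

variable {n : ℕ}

@[simp] lemma wE_E : wE (n := n) PS.E = 1 := rfl
@[simp] lemma wE_F : wE (n := n) PS.F = 0 := rfl
@[simp] lemma wE_S (i : Fin (n + 1)) : wE (PS.S i) = 0 := rfl
@[simp] lemma wE_ES (i : Fin n) : wE (PS.ES i) = 1 := rfl
@[simp] lemma wE_FS (i : Fin n) : wE (PS.FS i) = 0 := rfl
@[simp] lemma wF_E : wF (n := n) PS.E = 0 := rfl
@[simp] lemma wF_F : wF (n := n) PS.F = 1 := rfl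
@[simp] lemma wF_S (i : Fin (n + 1)) : wF (PS.S i) = 0 := rfl
@[simp] lemma wF_ES (i : Fin n) : wF (PS.ES i) = 0 := rfl
@[simp] lemma wF_FS (i : Fin n) : wF (PS.FS i) = 1 := rfl


/-- For every `n ≥ 1` and every nonempty subset `ℰ ⊆ {E, F}` of the
enzymes, the semi-open network `𝒫ⁿ_{ℰ⇌0}` has absolute concentration robustness in every
species of `ℰ`: for every choice of positive rates `κ`, every positive steady state `x`
satisfies `x_e = κ_{0→e} / κ_{e→0}` for each `e ∈ ℰ`. -/
theorem nsite_enzyme_ACR (n : ℕ) (hn : 1 ≤ n)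
    (ℰ : Finset (PS n)) (hℰ : ℰ ⊆ {PS.E, PS.F}) (hne : ℰ.Nonempty)
    (κ : Reaction (PS n) → ℝ) (hκ : ∀ r ∈ openOn (Pcycle n) ℰ, 0 < κ r)
    (x : PS n → ℝ) (hx : isPosSteadyState (openOn (Pcycle n) ℰ) κ x) :
    ∀ e ∈ ℰ, x e = κ (inflow e) / κ (outflow e) := by
  intro e hee
  have hin : inflow e ∈ openOn (Pcycle n) ℰ := by
    simp only [openOn, Finset.mem_union]
    exact Or.inl (Or.inr (Finset.mem_image_of_mem _ hee))
  have hout : outflow e ∈ openOn (Pcycle n) ℰ :=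
    Finset.mem_union_right _ (Finset.mem_image_of_mem _ hee)
  have hκout : κ (outflow e) ≠ 0 := (hκ _ hout).ne'
  have hEF : e = PS.E ∨ e = PS.F := by
    have := hℰ hee
    simpa using this
  rcases hEF with rfl | rfl
  · apply acr_key _ κ x hx wE _ hin hout hκout rfl
    intro r hr hr1 hr2
    simp only [openOn, Finset.mem_union, Finset.mem_image] at hr
    rcases hr with (hr | ⟨e', he', rfl⟩) | ⟨e', he', rfl⟩
    · simp only [Pcycle, Finset.mem_union, Finset.mem_image, Finset.mem_univ,
        true_and] at hr
      rcases hr with ((((⟨i, rfl⟩ | ⟨i, rfl⟩) | ⟨i, rfl⟩) | ⟨i, rfl⟩) | ⟨i, rfl⟩) | ⟨i, rfl⟩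
      · exact wsum_case1 wE _ _ _ (by simp)
      · exact wsum_case2 wE _ _ _ (by simp)
      · exact wsum_case2 wE _ _ _ (by simp)
      · exact wsum_case1 wE _ _ _ (by simp)
      · exact wsum_case2 wE _ _ _ (by simp)
      · exact wsum_case2 wE _ _ _ (by simp)
    · have hne' : e' ≠ PS.E := fun h => hr1 (by rw [h])
      have : e' = PS.F := by have := hℰ he'; simp at this; tauto
      subst this
      simp [inflow, unitC, mul_ite, Finset.sum_ite_eq']
    · have hne' : e' ≠ PS.E := fun h => hr2 (by rw [h])
      have : e' = PS.F := by have := hℰ he'; simp at this; tauto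
      subst this
      simp [outflow, unitC, mul_ite, Finset.sum_ite_eq']
  · apply acr_key _ κ x hx wF _ hin hout hκout rfl
    intro r hr hr1 hr2
    simp only [openOn, Finset.mem_union, Finset.mem_image] at hr
    rcases hr with (hr | ⟨e', he', rfl⟩) | ⟨e', he', rfl⟩
    · simp only [Pcycle, Finset.mem_union, Finset.mem_image, Finset.mem_univ,
        true_and] at hr
      rcases hr with ((((⟨i, rfl⟩ | ⟨i, rfl⟩) | ⟨i, rfl⟩) | ⟨i, rfl⟩) | ⟨i, rfl⟩) | ⟨i, rfl⟩
      · exact wsum_case1 wF _ _ _ (by simp)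
      · exact wsum_case2 wF _ _ _ (by simp)
      · exact wsum_case2 wF _ _ _ (by simp)
      · exact wsum_case1 wF _ _ _ (by simp)
      · exact wsum_case2 wF _ _ _ (by simp)
      · exact wsum_case2 wF _ _ _ (by simp)
    · have hne' : e' ≠ PS.F := fun h => hr1 (by rw [h])
      have : e' = PS.E := by have := hℰ he'; simp at this; tauto
      subst this
      simp [inflow, unitC, mul_ite, Finset.sum_ite_eq']
    · have hne' : e' ≠ PS.F := fun h => hr2 (by rw [h])
      have : e' = PS.E := by have := hℰ he'; simp at this; tauto
      subst this
      simp [outflow, unitC, mul_ite, Finset.sum_ite_eq']
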